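/- Let σ > 0 and let X, Z be independent real Gaussian random variables with mean 0 and variance σ²/2 on a probability space. Set y = X + i·Z and Q = (sign(X) + i·sign(Z))/√2. Then the quantization noise q = Q − (√(2/π)/σ)·y satisfies E[|q|²] = 1 − 2/π. -/

import Mathlib

/-!
The real and imaginary parts of `q` are `sign X / √2 - c X` and `sign Z / √2 - c Z`, where
`c = √(2/π)/σ` is the Bussgang gain, so `E|q|²` is the sum of two copies of
`E[(sign X / √2 - c X)²]`. As `sign X ^ 2 = 1` almost surely and `sign X * X = |X|`, this
is `1/2 - √2 c E|X| + c² E[X²]`, and for `X ~ N(0, v)` one has `E[X²] = v` and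
`E|X| = √(2v/π)`.
With `v = σ²/2` each part contributes `1/2 - 2/π + 1/π`.
-/

open MeasureTheory ProbabilityTheory Real Set
open scoped NNReal

lemma ProbabilityTheory.hasLaw_of_map_eq {Ω 𝓧 : Type*} {mΩ : MeasurableSpace Ω}
    {m𝓧 : MeasurableSpace 𝓧} {X : Ω → 𝓧} {μ : Measure 𝓧} [NeZero μ]
    {P : Measure Ω} (h : P.map X = μ) : HasLaw X μ P :=
  ⟨.of_map_ne_zero (h ▸ NeZero.ne μ), h⟩

lemma integral_Ioi_mul_exp_neg_mul_sq {b : ℝ} (hb : 0 < b) :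
    ∫ x in Ioi (0 : ℝ), x * exp (-b * x ^ 2) = (2 * b)⁻¹ := by
  rw [← Complex.ofReal_inj, ← integral_complex_ofReal]
  push_cast
  exact integral_mul_cexp_neg_mul_sq (by simpa using hb)

lemma integral_sq_gaussianReal (v : ℝ≥0) : ∫ x, x ^ 2 ∂gaussianReal 0 v = v := by
  rw [← variance_fun_id_gaussianReal (μ := 0),
    variance_of_integral_eq_zero aemeasurable_id' integral_id_gaussianReal]

lemma integral_abs_gaussianReal (v : ℝ≥0) :
    ∫ x, |x| ∂gaussianReal 0 v = √(2 * v / π) := by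
  rcases eq_or_ne v 0 with rfl | hv
  · simp [gaussianReal_zero_var]
  calc ∫ x, |x| ∂gaussianReal 0 v
      = (√(2 * π * v))⁻¹ * ∫ x, |x| * exp (-(2 * v : ℝ)⁻¹ * |x| ^ 2) := by
        rw [integral_gaussianReal_eq_integral_smul hv, ← integral_const_mul]
        congr with x
        simp only [gaussianPDFReal, sq_abs, smul_eq_mul, sub_zero]
        ring_nf
    _ = (√(2 * π * v))⁻¹ * (2 * v) := by
        rw [integral_comp_abs (f := fun t ↦ t * exp (-(2 * v : ℝ)⁻¹ * t ^ 2)),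
          integral_Ioi_mul_exp_neg_mul_sq (by positivity)]
        field_simp
    _ = √(2 * v / π) := by
        have h2v : (2 * v : ℝ) = √(2 * v) ^ 2 := (sq_sqrt (by positivity)).symm
        rw [show (2 * π * v : ℝ) = π * (2 * v) by ring, sqrt_mul Real.pi_pos.le,
          sqrt_div' _ Real.pi_pos.le]
        nth_rewrite 2 [h2v]
        have : 0 < √π := sqrt_pos.mpr Real.pi_pos
        have : 0 < √(2 * v) := sqrt_pos.mpr (by positivity)
        field_simp

noncomputable def oneBitNoise (c t : ℝ) : ℝ := Real.sign t / √2 - c * t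

lemma oneBitNoise_sq {c t : ℝ} (ht : t ≠ 0) :
    oneBitNoise c t ^ 2 = 1 / 2 - √2 * c * |t| + c ^ 2 * t ^ 2 := by
  have h2 : √2 ^ 2 = 2 := sq_sqrt zero_le_two
  have : √2 ≠ 0 := by positivity
  rcases ht.lt_or_gt with h | h
  · rw [oneBitNoise, sign_of_neg h, abs_of_neg h]
    field_simp
    linear_combination (-1 - 2 * √2 * c * t) * h2
  · rw [oneBitNoise, sign_of_pos h, abs_of_pos h]
    field_simp
    linear_combination (-1 + 2 * √2 * c * t) * h2

lemma oneBitNoise_sq_ae_eq_gaussianReal (c : ℝ) {v : ℝ≥0} (hv : v ≠ 0) :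
    (fun t ↦ oneBitNoise c t ^ 2) =ᵐ[gaussianReal 0 v]
      fun t ↦ 1 / 2 - √2 * c * |t| + c ^ 2 * t ^ 2 := by
  filter_upwards [(gaussianReal_absolutelyContinuous 0 hv).ae_le (Measure.ae_ne volume 0)]
    with t ht
  exact oneBitNoise_sq ht

lemma integrable_oneBitNoise_sq_gaussianReal (c : ℝ) {v : ℝ≥0} (hv : v ≠ 0) :
    Integrable (fun t ↦ oneBitNoise c t ^ 2) (gaussianReal 0 v) := by
  have habs : Integrable (fun t ↦ |t|) (gaussianReal 0 v) :=
    ((memLp_id_gaussianReal 1).integrable le_rfl).abs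
  have hsq : Integrable (fun t ↦ t ^ 2) (gaussianReal 0 v) :=
    (memLp_id_gaussianReal 2).integrable_sq
  refine Integrable.congr ?_ (oneBitNoise_sq_ae_eq_gaussianReal c hv).symm
  exact ((integrable_const _).sub (habs.const_mul _)).add (hsq.const_mul _)

lemma integral_oneBitNoise_sq_gaussianReal (c : ℝ) {v : ℝ≥0} (hv : v ≠ 0) :
    ∫ t, oneBitNoise c t ^ 2 ∂gaussianReal 0 v =
      1 / 2 - √2 * c * √(2 * v / π) + c ^ 2 * v := by
  have habs : Integrable (fun t ↦ |t|) (gaussianReal 0 v) :=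
    ((memLp_id_gaussianReal 1).integrable le_rfl).abs
  have hsq : Integrable (fun t ↦ t ^ 2) (gaussianReal 0 v) :=
    (memLp_id_gaussianReal 2).integrable_sq
  have hlin : Integrable (fun t ↦ 1 / 2 - √2 * c * |t|) (gaussianReal 0 v) :=
    (integrable_const _).sub (habs.const_mul _)
  rw [integral_congr_ae (oneBitNoise_sq_ae_eq_gaussianReal c hv),
    integral_add hlin (hsq.const_mul _), integral_sub (integrable_const _) (habs.const_mul _),
    integral_const, integral_const_mul, integral_const_mul, integral_abs_gaussianReal,
    integral_sq_gaussianReal]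
  simp

lemma sq_div_two_toNNReal_ne_zero {σ : ℝ} (hσ : σ ≠ 0) : (σ ^ 2 / 2).toNNReal ≠ 0 := by
  rw [Ne, Real.toNNReal_eq_zero, not_le]
  positivity

lemma integral_oneBitNoise_sq_bussgang {σ : ℝ} (hσ : 0 < σ) :
    ∫ t, oneBitNoise (√(2 / π) / σ) t ^ 2 ∂gaussianReal 0 (σ ^ 2 / 2).toNNReal =
      1 / 2 - 1 / π := by
  rw [integral_oneBitNoise_sq_gaussianReal _ (sq_div_two_toNNReal_ne_zero hσ.ne'),
    Real.coe_toNNReal _ (by positivity), show 2 * (σ ^ 2 / 2) / π = σ ^ 2 / π by ring,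
    sqrt_div' (σ ^ 2) Real.pi_pos.le, sqrt_sq hσ.le, sqrt_div' 2 Real.pi_pos.le]
  have h2 : √2 ^ 2 = 2 := sq_sqrt zero_le_two
  have hπ : √π ^ 2 = π := sq_sqrt Real.pi_pos.le
  have : 0 < √π := sqrt_pos.mpr Real.pi_pos
  field_simp
  rw [h2, hπ]
  ring

lemma norm_sq_oneBitQuantizer_sub_mul (c x z : ℝ) :
    ‖(Real.sign x + Real.sign z * Complex.I) / √2 - (c : ℂ) * (x + z * Complex.I)‖ ^ 2
      = oneBitNoise c x ^ 2 + oneBitNoise c z ^ 2 := by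
  have : (√2 : ℂ) ≠ 0 := Complex.ofReal_ne_zero.mpr (by positivity)
  rw [← Complex.normSq_add_mul_I, ← Complex.sq_norm]
  congr 2
  simp only [oneBitNoise]
  push_cast
  field_simp
  ring

theorem one_bit_quantization_noise_power_general
    {Ω : Type*} [MeasurableSpace Ω] (μ : Measure Ω)
    (σ : ℝ) (hσ : 0 < σ)
    (X Z : Ω → ℝ)
    (hX : Measure.map X μ = gaussianReal 0 (σ ^ 2 / 2).toNNReal)
    (hZ : Measure.map Z μ = gaussianReal 0 (σ ^ 2 / 2).toNNReal)
    (y Q q : Ω → ℂ)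
    (hy : ∀ ω, y ω = X ω + Z ω * Complex.I)
    (hQ : ∀ ω, Q ω = (Real.sign (X ω) + Real.sign (Z ω) * Complex.I) /
      Real.sqrt 2)
    (hq : ∀ ω, q ω = Q ω - (Real.sqrt (2 / π) / σ : ℝ) * y ω) :
    ∫ ω, ‖q ω‖ ^ 2 ∂μ = 1 - 2 / π := by
  set f := fun t ↦ oneBitNoise (√(2 / π) / σ) t ^ 2
  have hf : Integrable f (gaussianReal 0 (σ ^ 2 / 2).toNNReal) :=
    integrable_oneBitNoise_sq_gaussianReal _ (sq_div_two_toNNReal_ne_zero hσ.ne')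
  have hXlaw := hasLaw_of_map_eq hX
  have hZlaw := hasLaw_of_map_eq hZ
  have hnorm : ∀ ω, ‖q ω‖ ^ 2 = f (X ω) + f (Z ω) := fun ω ↦ by
    rw [hq, hQ, hy]
    exact norm_sq_oneBitQuantizer_sub_mul _ _ _
  simp_rw [hnorm]
  rw [integral_add ((hX ▸ hf).comp_aemeasurable hXlaw.aemeasurable)
      ((hZ ▸ hf).comp_aemeasurable hZlaw.aemeasurable),
    ← Function.comp_def f X, ← Function.comp_def f Z,
    hXlaw.integral_comp hf.aestronglyMeasurable, hZlaw.integral_comp hf.aestronglyMeasurable,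
    integral_oneBitNoise_sq_bussgang hσ]
  ring

/-- Power of the Bussgang quantization noise of a one-bit quantizer applied to a
circularly symmetric complex Gaussian `y = X + iZ` with `E[|y|²] = σ²`: the noise
`q = Q − (√(2/π)/σ)·y` satisfies `E[|q|²] = 1 − 2/π`. -/
theorem one_bit_quantization_noise_power
    {Ω : Type*} [MeasurableSpace Ω] (μ : Measure Ω) [IsProbabilityMeasure μ]
    (σ : ℝ) (hσ : 0 < σ)
    (X Z : Ω → ℝ) (hindep : IndepFun X Z μ)
    (hX : Measure.map X μ = gaussianReal 0 (σ ^ 2 / 2).toNNReal)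
    (hZ : Measure.map Z μ = gaussianReal 0 (σ ^ 2 / 2).toNNReal)
    (y Q q : Ω → ℂ)
    (hy : ∀ ω, y ω = X ω + Z ω * Complex.I)
    (hQ : ∀ ω, Q ω = (Real.sign (X ω) + Real.sign (Z ω) * Complex.I) /
      Real.sqrt 2)
    (hq : ∀ ω, q ω = Q ω - (Real.sqrt (2 / π) / σ : ℝ) * y ω) :
    ∫ ω, ‖q ω‖ ^ 2 ∂μ = 1 - 2 / π :=
  one_bit_quantization_noise_power_general μ σ hσ X Z hX hZ y Q q hy hQ hq
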